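/- arXiv:1505.05313 — 3 statements merged into one kernel-verified Lean document; each statement's English description precedes it below -/
import Mathlib

section
/- For a, m > 0, c ≠ 0, and j > min_{(0, a²/m)} g, where g(v) = m(1+v²)/v + (1/2)(mc/(mv − a²))², the equation g(v) = j has at least two solutions in the interval (0, a²/m). -/
/-!
The function `g` is continuous on `(0, a²/m)` and tends to `+∞` at both ends: like `m / v` at
`0`, and like `(m c)² / (2 (m v - a²)²)` at `a²/m` because `c ≠ 0`. Since `inf g < j` there is
a point `v₀` with `g v₀ < j`, and the intermediate value theorem gives one solution of `g v = j`
on each side of `v₀`.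
-/

open Filter Topology Set

theorem exists_mem_Ioo_eq_of_tendsto_nhdsGT_atTop {f : ℝ → ℝ} {p b j : ℝ} (hpb : p < b)
    (hf : ContinuousOn f (Ioc p b)) (hp : Tendsto f (𝓝[>] p) atTop) (hb : f b < j) :
    ∃ v ∈ Ioo p b, f v = j := by
  obtain ⟨ε, ⟨hpε, hεb⟩, hjε⟩ :=
    (Eventually.and (Ioo_mem_nhdsGT hpb) (hp.eventually_ge_atTop j)).exists
  obtain ⟨v, ⟨hεv, hvb⟩, hv⟩ :=
    intermediate_value_Ico' hεb.le (hf.mono (Icc_subset_Ioc_iff hεb.le |>.mpr ⟨hpε, le_rfl⟩))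
      ⟨hb, hjε⟩
  exact ⟨v, ⟨hpε.trans_le hεv, hvb⟩, hv⟩

theorem exists_mem_Ioo_eq_of_tendsto_nhdsLT_atTop {f : ℝ → ℝ} {a q j : ℝ} (haq : a < q)
    (hf : ContinuousOn f (Ico a q)) (hq : Tendsto f (𝓝[<] q) atTop) (ha : f a < j) :
    ∃ v ∈ Ioo a q, f v = j := by
  obtain ⟨δ, ⟨haδ, hδq⟩, hjδ⟩ :=
    (Eventually.and (Ioo_mem_nhdsLT haq) (hq.eventually_ge_atTop j)).exists
  obtain ⟨v, ⟨hav, hvδ⟩, hv⟩ :=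
    intermediate_value_Ioc haδ.le (hf.mono (Icc_subset_Ico_iff haδ.le |>.mpr ⟨le_rfl, hδq⟩))
      ⟨ha, hjδ⟩
  exact ⟨v, ⟨hav, hvδ.trans_lt hδq⟩, hv⟩

theorem exists_eq_on_both_sides_of_tendsto_atTop {f : ℝ → ℝ} {p q v₀ j : ℝ}
    (hf : ContinuousOn f (Ioo p q)) (hp : Tendsto f (𝓝[>] p) atTop)
    (hq : Tendsto f (𝓝[<] q) atTop) (hv₀ : v₀ ∈ Ioo p q) (hj : f v₀ < j) :
    ∃ v₁ ∈ Ioo p v₀, ∃ v₂ ∈ Ioo v₀ q, f v₁ = j ∧ f v₂ = j := by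
  obtain ⟨v₁, hv₁, h₁⟩ := exists_mem_Ioo_eq_of_tendsto_nhdsGT_atTop hv₀.1
    (hf.mono (Ioc_subset_Ioo_right hv₀.2)) hp hj
  obtain ⟨v₂, hv₂, h₂⟩ := exists_mem_Ioo_eq_of_tendsto_nhdsLT_atTop hv₀.2
    (hf.mono (Ico_subset_Ioo_left hv₀.1)) hq hj
  exact ⟨v₁, hv₁, v₂, hv₂, h₁, h₂⟩

theorem tendsto_div_sq_nhdsNE_zero_atTop {k : ℝ} (hk : k ≠ 0) :
    Tendsto (fun x : ℝ => (k / x) ^ 2) (𝓝[≠] 0) atTop := by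
  have h : (fun x : ℝ => (k / x) ^ 2) = fun x => (|k| * ‖x⁻¹‖) ^ 2 := by
    ext x; rw [Real.norm_eq_abs, ← abs_mul, sq_abs, div_eq_mul_inv]
  rw [h]
  exact (tendsto_pow_atTop two_ne_zero).comp
    (tendsto_norm_inv_nhdsNE_zero_atTop.const_mul_atTop (abs_pos.mpr hk))

theorem tendsto_sub_nhdsNE_div {m a : ℝ} (hm : m ≠ 0) :
    Tendsto (fun v => m * v - a) (𝓝[≠] (a / m)) (𝓝[≠] 0) := by
  refine tendsto_nhdsWithin_of_tendsto_nhds_of_eventually_within _ ?_ ?_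
  · exact (by fun_prop : Continuous fun v : ℝ => m * v - a).tendsto' _ _
      (by rw [mul_div_cancel₀ _ hm, sub_self]) |>.mono_left nhdsWithin_le_nhds
  · filter_upwards [self_mem_nhdsWithin] with v hv
    exact sub_ne_zero.mpr fun h => hv ((eq_div_iff hm).mpr (by rw [mul_comm, h]))

theorem tendsto_div_sq_nhdsNE_pole_atTop {m a k : ℝ} (hm : m ≠ 0) (hk : k ≠ 0) :
    Tendsto (fun v => (k / (m * v - a)) ^ 2) (𝓝[≠] (a / m)) atTop :=
  (tendsto_div_sq_nhdsNE_zero_atTop hk).comp (tendsto_sub_nhdsNE_div hm)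

theorem tendsto_mul_one_add_sq_div_nhdsGT_zero_atTop {m : ℝ} (hm : 0 < m) :
    Tendsto (fun v => m * (1 + v ^ 2) / v) (𝓝[>] 0) atTop := by
  refine tendsto_atTop_mono' _ ?_ (tendsto_inv_nhdsGT_zero.const_mul_atTop hm)
  filter_upwards [self_mem_nhdsWithin] with v (hv : 0 < v)
  rw [← div_eq_mul_inv]
  gcongr
  nlinarith [sq_nonneg v]

/-- For a, m > 0, c ≠ 0 and j above the minimum of g on (0, a²/m), the equation
g(v) = j has at least two solutions in (0, a²/m). -/
theorem stmt_4 (a m c j : ℝ) (ha : 0 < a) (hm : 0 < m) (hc : c ≠ 0) (g : ℝ → ℝ)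
    (hg : ∀ v, g v = m * (1 + v ^ 2) / v + (1 / 2) * (m * c / (m * v - a ^ 2)) ^ 2)
    (hj : sInf (g '' Set.Ioo 0 (a ^ 2 / m)) < j) :
    ∃ v₁ ∈ Set.Ioo 0 (a ^ 2 / m), ∃ v₂ ∈ Set.Ioo 0 (a ^ 2 / m),
      v₁ ≠ v₂ ∧ g v₁ = j ∧ g v₂ = j := by
  have hg' : g = fun v => m * (1 + v ^ 2) / v + (1 / 2) * (m * c / (m * v - a ^ 2)) ^ 2 :=
    funext hg
  have hb : 0 < a ^ 2 / m := by positivity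
  have hcont : ContinuousOn g (Ioo 0 (a ^ 2 / m)) := by
    refine fun v hv => ContinuousAt.continuousWithinAt ?_
    rw [hg']
    have hv_ne : v ≠ 0 := hv.1.ne'
    have hpole : m * v - a ^ 2 ≠ 0 := (sub_neg.mpr ((lt_div_iff₀' hm).mp hv.2)).ne
    fun_prop (disch := assumption)
  have hleft : Tendsto g (𝓝[>] 0) atTop := hg' ▸
    (tendsto_mul_one_add_sq_div_nhdsGT_zero_atTop hm).atTop_add_nonneg
      fun v => by positivity
  have hright : Tendsto g (𝓝[<] (a ^ 2 / m)) atTop := by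
    have hfirst : ContinuousAt (fun v => m * (1 + v ^ 2) / v) (a ^ 2 / m) := by
      fun_prop (disch := exact hb.ne')
    have hsecond := (tendsto_div_sq_nhdsNE_pole_atTop (a := a ^ 2) hm.ne'
      (mul_ne_zero hm.ne' hc)).mono_left (nhdsLT_le_nhdsNE _)
    rw [hg']
    exact (hfirst.tendsto.mono_left nhdsWithin_le_nhds).add_atTop
      (hsecond.const_mul_atTop one_half_pos)
  obtain ⟨_, ⟨v₀, hv₀, rfl⟩, hv₀j⟩ := exists_lt_of_csInf_lt ((nonempty_Ioo.mpr hb).image _) hj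
  obtain ⟨v₁, hv₁, v₂, hv₂, h₁, h₂⟩ :=
    exists_eq_on_both_sides_of_tendsto_atTop hcont hleft hright hv₀ hv₀j
  exact ⟨v₁, ⟨hv₁.1, hv₁.2.trans hv₀.2⟩, v₂, ⟨hv₀.1.trans hv₂.1, hv₂.2⟩,
    (hv₁.2.trans hv₂.1).ne, h₁, h₂⟩
end

section
/- For a, m > 0, c ≠ 0, and j > min_{(a²/m, ∞)} g, where g(v) = m(1+v²)/v + (1/2)(mc/(mv − a²))², the equation g(v) = j has at least two solutions in the interval (a²/m, ∞). -/
/-!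
On `(a²/m, ∞)` the function `g` is continuous and tends to `+∞` at both ends: at the left end
because the magnetic term `(m c / (m v - a²))² / 2` blows up, at `+∞` because `g v ≥ m v`.
A value `j` above the infimum is undercut at some `v₀`, and the intermediate value theorem on
each side of `v₀` gives two distinct solutions of `g v = j`.
-/

open Filter Set Topology

section TwoSolutions

variable {α β : Type*} [ConditionallyCompleteLinearOrder α] [TopologicalSpace α] [OrderTopology α]
  [DenselyOrdered α] [LinearOrder β] [TopologicalSpace β] [OrderClosedTopology β]

theorem exists_ne_eq_of_continuousOn_Ioi_of_tendsto_atTop {f : α → β} {L x₀ : α} {j : β}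
    (hf : ContinuousOn f (Ioi L)) (hleft : Tendsto f (𝓝[>] L) atTop)
    (hright : Tendsto f atTop atTop) (hx₀ : L < x₀) (hfx₀ : f x₀ < j) :
    ∃ v₁ ∈ Ioi L, ∃ v₂ ∈ Ioi L, v₁ ≠ v₂ ∧ f v₁ = j ∧ f v₂ = j := by
  have := nhdsGT_neBot_of_exists_gt ⟨x₀, hx₀⟩
  obtain ⟨u, hju, hu⟩ := ((hleft.eventually_ge_atTop j).and (Ioo_mem_nhdsGT hx₀)).exists
  obtain ⟨v₁, ⟨huv₁, hv₁x₀⟩, hv₁⟩ :=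
    intermediate_value_Ico' hu.2.le (hf.mono fun x hx ↦ hu.1.trans_le hx.1) ⟨hfx₀, hju⟩
  obtain ⟨v₂, hx₀v₂, hv₂⟩ :=
    intermediate_value_Ioi (hf.mono fun x hx ↦ hx₀.trans_le hx) hright hfx₀
  exact ⟨v₁, hu.1.trans_le huv₁, v₂, hx₀.trans hx₀v₂, (hv₁x₀.trans hx₀v₂).ne, hv₁, hv₂⟩

end TwoSolutions

theorem tendsto_div_sub_sq_nhdsGT {k m b : ℝ} (hk : k ≠ 0) (hm : 0 < m) :
    Tendsto (fun v ↦ (k / (m * v - b)) ^ 2) (𝓝[>] (b / m)) atTop := by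
  have hden : Tendsto (fun v ↦ m * v - b) (𝓝[>] (b / m)) (𝓝[>] 0) := by
    refine tendsto_nhdsWithin_iff.2 ⟨?_, eventually_nhdsWithin_of_forall fun v hv ↦ ?_⟩
    · exact tendsto_nhdsWithin_of_tendsto_nhds <|
        (by fun_prop : Continuous fun v : ℝ ↦ m * v - b).tendsto' _ _ (by field_simp; ring)
    · simpa [mul_comm m] using (div_lt_iff₀ hm).1 hv
  have := ((tendsto_pow_atTop two_ne_zero).comp (tendsto_inv_nhdsGT_zero.comp hden))
    |>.const_mul_atTop (by positivity : 0 < k ^ 2)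
  simpa [div_eq_mul_inv, mul_pow] using this

noncomputable def reducedRankineHugoniot (m c a v : ℝ) : ℝ :=
  m * (1 + v ^ 2) / v + (1 / 2) * (m * c / (m * v - a ^ 2)) ^ 2

namespace reducedRankineHugoniot

variable {m c : ℝ}

theorem tendsto_nhdsGT (hm : 0 < m) (hc : c ≠ 0) (a : ℝ) :
    Tendsto (reducedRankineHugoniot m c a) (𝓝[>] (a ^ 2 / m)) atTop := by
  refine tendsto_atTop_mono' _ ?_
    ((tendsto_div_sub_sq_nhdsGT (mul_ne_zero hm.ne' hc) hm).const_mul_atTop one_half_pos)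
  filter_upwards [self_mem_nhdsWithin] with v hv
  have hv₀ : 0 < v := (div_nonneg (sq_nonneg a) hm.le).trans_lt hv
  exact le_add_of_nonneg_left (by positivity)

theorem tendsto_atTop (hm : 0 < m) (a : ℝ) :
    Tendsto (reducedRankineHugoniot m c a) atTop atTop := by
  refine tendsto_atTop_mono' _ ?_ (tendsto_id.const_mul_atTop hm)
  filter_upwards [eventually_gt_atTop 0] with v hv
  have hmv : m * v ≤ m * (1 + v ^ 2) / v := by
    rw [le_div_iff₀ hv]
    nlinarith
  exact hmv.trans (le_add_of_nonneg_right (by positivity))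

theorem continuousOn (hm : 0 < m) (a : ℝ) :
    ContinuousOn (reducedRankineHugoniot m c a) (Ioi (a ^ 2 / m)) := by
  refine ContinuousOn.add ?_ ?_
  · exact continuousOn_const.mul (by fun_prop) |>.div continuousOn_id
      fun v hv ↦ ((div_nonneg (sq_nonneg a) hm.le).trans_lt hv).ne'
  · refine continuousOn_const.mul ((continuousOn_const.div (by fun_prop) fun v hv ↦ ?_).pow 2)
    have := (div_lt_iff₀ hm).1 hv
    linarith

end reducedRankineHugoniot

theorem stmt_5_general (a m c j : ℝ) (hm : 0 < m) (hc : c ≠ 0) (g : ℝ → ℝ)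
    (hg : ∀ v, g v = m * (1 + v ^ 2) / v + (1 / 2) * (m * c / (m * v - a ^ 2)) ^ 2)
    (hj : sInf (g '' Set.Ioi (a ^ 2 / m)) < j) :
    ∃ v₁ ∈ Set.Ioi (a ^ 2 / m), ∃ v₂ ∈ Set.Ioi (a ^ 2 / m),
      v₁ ≠ v₂ ∧ g v₁ = j ∧ g v₂ = j := by
  obtain rfl : g = reducedRankineHugoniot m c a := funext hg
  obtain ⟨_, ⟨v₀, hv₀, rfl⟩, hv₀j⟩ := exists_lt_of_csInf_lt (nonempty_Ioi.image _) hj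
  exact exists_ne_eq_of_continuousOn_Ioi_of_tendsto_atTop
    (reducedRankineHugoniot.continuousOn hm a) (reducedRankineHugoniot.tendsto_nhdsGT hm hc a)
    (reducedRankineHugoniot.tendsto_atTop hm a) hv₀ hv₀j

/-- For a, m > 0, c ≠ 0 and j above the minimum of g on (a²/m, ∞), the equation
g(v) = j has at least two solutions in (a²/m, ∞). -/
theorem stmt_5 (a m c j : ℝ) (ha : 0 < a) (hm : 0 < m) (hc : c ≠ 0) (g : ℝ → ℝ)
    (hg : ∀ v, g v = m * (1 + v ^ 2) / v + (1 / 2) * (m * c / (m * v - a ^ 2)) ^ 2)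
    (hj : sInf (g '' Set.Ioi (a ^ 2 / m)) < j) :
    ∃ v₁ ∈ Set.Ioi (a ^ 2 / m), ∃ v₂ ∈ Set.Ioi (a ^ 2 / m),
      v₁ ≠ v₂ ∧ g v₁ = j ∧ g v₂ = j :=
  stmt_5_general a m c j hm hc g hg hj
end

section
/- For a slow parallel isothermal MHD shock with ρ⁻ = 1 and ρ⁺ = (a² + 2)/(a² + 1), the 5×5 determinant Δ(0,1) = det(R⁻, J, R⁺) vanishes, where R⁻ = (1, √ρ⁺, −i√((a² − ρ⁺)(a²/ρ⁺ − 1/(1 − ρ⁺))), a, 0)ᵀ, J = (0,0,i,0,0)ᵀ, and R⁺ is the 5×3 matrix with columns (√ρ⁺, 2, 0, 0, 0)ᵀ, (a(ρ⁺−1), 0, 0, 2, 0)ᵀ, (0, 0, −a√ρ⁺, 0, 1)ᵀ. In fact Δ(0,1) = 2i[ρ⁺(a² + 1) − (a² + 2)]. -/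
open Matrix Complex

/-- The `J` column has a single nonzero entry `j`, and expanding along it leaves a 3×3 minor in which
`s` enters only through `s ^ 2`; in particular the entry `c` plays no role. -/
theorem det_lopatinski_eq {R : Type*} [CommRing R] (s r a c j : R) (hs : s ^ 2 = r) :
    !![1, 0, s, a * (r - 1), 0;
      s, 0, 2, 0, 0;
      c, j, 0, 0, -a * s;
      a, 0, 0, 2, 0;
      0, 0, 0, 0, 1].det = 2 * j * (r * (a ^ 2 + 1) - (a ^ 2 + 2)) := by
  simp [det_succ_row_zero, Fin.sum_univ_succ, Fin.succAbove]
  linear_combination (2 * j) * hs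

theorem stmt_9_general (a ρp : ℝ) (hρp : ρp = (a ^ 2 + 2) / (a ^ 2 + 1))
    (M : Matrix (Fin 5) (Fin 5) ℂ)
    (hM : M = !![
      (1 : ℂ), 0, (Real.sqrt ρp : ℂ), (a : ℂ) * ((ρp : ℂ) - 1), 0;
      (Real.sqrt ρp : ℂ), 0, 2, 0, 0;
      -Complex.I * (Real.sqrt ((a ^ 2 - ρp) * (a ^ 2 / ρp - 1 / (1 - ρp))) : ℂ),
        Complex.I, 0, 0, -(a : ℂ) * (Real.sqrt ρp : ℂ);
      (a : ℂ), 0, 0, 2, 0;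
      0, 0, 0, 0, 1]) :
    M.det = 2 * Complex.I * ((ρp : ℂ) * ((a : ℂ) ^ 2 + 1) - ((a : ℂ) ^ 2 + 2)) ∧
    M.det = 0 := by
  have hρp_nonneg : 0 ≤ ρp := hρp ▸ by positivity
  have hsqrt : ((Real.sqrt ρp : ℝ) : ℂ) ^ 2 = ρp := by
    rw [← ofReal_pow, Real.sq_sqrt hρp_nonneg]
  have hdet := hM ▸ det_lopatinski_eq _ _ _ _ I hsqrt
  have hjump : ρp * (a ^ 2 + 1) = a ^ 2 + 2 := by
    rw [hρp, div_mul_cancel₀ _ (by positivity)]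
  have hjumpC : (ρp : ℂ) * ((a : ℂ) ^ 2 + 1) = (a : ℂ) ^ 2 + 2 := by
    exact_mod_cast hjump
  exact ⟨hdet, by rw [hdet, hjumpC, sub_self, mul_zero]⟩

/-- For a slow parallel isothermal MHD shock with ρ⁻ = 1 and
ρ⁺ = (a²+2)/(a²+1), the Lopatinski determinant Δ(0,1) = det(R⁻, J, R⁺)
equals 2i[ρ⁺(a²+1) − (a²+2)] and hence vanishes. -/
theorem stmt_9 (a ρp : ℝ) (ha : 0 < a) (hρp : ρp = (a ^ 2 + 2) / (a ^ 2 + 1))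
    (M : Matrix (Fin 5) (Fin 5) ℂ)
    (hM : M = !![
      (1 : ℂ), 0, (Real.sqrt ρp : ℂ), (a : ℂ) * ((ρp : ℂ) - 1), 0;
      (Real.sqrt ρp : ℂ), 0, 2, 0, 0;
      -Complex.I * (Real.sqrt ((a ^ 2 - ρp) * (a ^ 2 / ρp - 1 / (1 - ρp))) : ℂ),
        Complex.I, 0, 0, -(a : ℂ) * (Real.sqrt ρp : ℂ);
      (a : ℂ), 0, 0, 2, 0;
      0, 0, 0, 0, 1]) :
    M.det = 2 * Complex.I * ((ρp : ℂ) * ((a : ℂ) ^ 2 + 1) - ((a : ℂ) ^ 2 + 2)) ∧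
    M.det = 0 :=
  stmt_9_general a ρp hρp M hM
end
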